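/- Let π: C → D be a surjective linear map of coalgebras satisfying Δ'∘π = (π⊗π)∘Δ but not necessarily ε'∘π = ε. Then the map (π⊗id_C)∘Δ: C → ind_D^C(D) is still surjective (though in general not injective). -/
import Mathlib


open TensorProduct

namespace SuperCoalg

variable (k : Type) [Field k]
variable (C : Type) [AddCommGroup C] [Module k C] [Coalgebra k C]

/-- `β : V →ₗ[k] V ⊗[k] C` is a (right) comodule structure map over the coalgebra `C`. -/
structure IsComodule {V : Type} [AddCommGroup V] [Module k V]
    (β : V →ₗ[k] V ⊗[k] C) : Prop where
  coassoc : (TensorProduct.assoc k V C C).toLinearMap ∘ₗ β.rTensor C ∘ₗ β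
      = LinearMap.lTensor V (Coalgebra.comul (R := k) (A := C)) ∘ₗ β
  counit_id : (TensorProduct.rid k V).toLinearMap ∘ₗ
      LinearMap.lTensor V (Coalgebra.counit (R := k) (A := C)) ∘ₗ β = LinearMap.id

/-- A bundled right `C`-comodule. -/
structure Comod where
  V : Type
  [addCommGroup : AddCommGroup V]
  [module : Module k V]
  β : V →ₗ[k] V ⊗[k] C
  isComodule : IsComodule k C β

attribute [instance] Comod.addCommGroup Comod.module

variable {k C}

/-- A submodule `W ≤ V` is a subcomodule for the structure map `β`. -/
def IsSubcomodule {V : Type} [AddCommGroup V] [Module k V]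
    (β : V →ₗ[k] V ⊗[k] C) (W : Submodule k V) : Prop :=
  ∀ w ∈ W, β w ∈ LinearMap.range (W.subtype.rTensor C)

/-- `f` is a homomorphism of right `C`-comodules from `(V, β)` to `(W, γ)`. -/
def IsComodHom {V W : Type} [AddCommGroup V] [Module k V] [AddCommGroup W] [Module k W]
    (β : V →ₗ[k] V ⊗[k] C) (γ : W →ₗ[k] W ⊗[k] C) (f : V →ₗ[k] W) : Prop :=
  f.rTensor C ∘ₗ β = γ ∘ₗ f

/-- A subcomodule is simple if it is nonzero and has no nonzero proper subcomodules. -/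
def IsSimpleSubcomodule {V : Type} [AddCommGroup V] [Module k V]
    (β : V →ₗ[k] V ⊗[k] C) (W : Submodule k V) : Prop :=
  IsSubcomodule β W ∧ W ≠ ⊥ ∧
    ∀ U : Submodule k V, U ≤ W → IsSubcomodule β U → U = ⊥ ∨ U = W

/-- The socle of the comodule `(V, β)`: the sum of all its simple subcomodules. -/
def socle {V : Type} [AddCommGroup V] [Module k V]
    (β : V →ₗ[k] V ⊗[k] C) : Submodule k V :=
  sSup {W : Submodule k V | IsSimpleSubcomodule β W}

/-- A comodule is simple if it is nonzero and has no nonzero proper subcomodules. -/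
def IsSimpleComod (M : Comod k C) : Prop :=
  Nontrivial M.V ∧ ∀ W : Submodule k M.V, IsSubcomodule M.β W → W = ⊥ ∨ W = ⊤

/-- A comodule is indecomposable if it is nonzero and is not the direct sum of two
nonzero subcomodules. -/
def IsIndecomposableComod (M : Comod k C) : Prop :=
  Nontrivial M.V ∧ ∀ W W' : Submodule k M.V,
    IsSubcomodule M.β W → IsSubcomodule M.β W' → IsCompl W W' → W = ⊥ ∨ W' = ⊥

/-- A comodule is injective if it splits off every comodule containing it as a
subcomodule. -/
def IsInjectiveComod (M : Comod k C) : Prop :=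
  ∀ (W : Comod k C) (g : M.V →ₗ[k] W.V),
    IsComodHom M.β W.β g → Function.Injective g →
      ∃ X' : Submodule k W.V, IsSubcomodule W.β X' ∧ IsCompl (LinearMap.range g) X'

/-- `N` is an injective cover of the simple comodule `S`: `N` is indecomposable,
injective, and its socle is a copy of `S`. -/
def IsInjectiveCover (N S : Comod k C) : Prop :=
  IsIndecomposableComod N ∧ IsInjectiveComod N ∧
    ∃ g : S.V →ₗ[k] N.V, IsComodHom S.β N.β g ∧ Function.Injective g ∧
      LinearMap.range g = socle N.β

/-- The coefficient map `φ_V : V* ⊗ V → C` of a comodule `(V, β)`, given by right linear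
extension of forms, `φ_V (ω ⊗ v) = (ω ⊗ id) (β v)`. -/
noncomputable def coeffMap {V : Type} [AddCommGroup V] [Module k V]
    (β : V →ₗ[k] V ⊗[k] C) : (Module.Dual k V) ⊗[k] V →ₗ[k] C :=
  (TensorProduct.lid k C).toLinearMap ∘ₗ
    (contractLeft k V).rTensor C ∘ₗ
    (TensorProduct.assoc k (Module.Dual k V) V C).symm.toLinearMap ∘ₗ
    LinearMap.lTensor (Module.Dual k V) β

variable {D : Type} [AddCommGroup D] [Module k D] [Coalgebra k D]

/-- `π : C → D` is a homomorphism of coalgebras: `Δ' ∘ π = (π ⊗ π) ∘ Δ` and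
`ε' ∘ π = ε`. -/
structure IsCoalgebraHom (π : C →ₗ[k] D) : Prop where
  comul_comp : Coalgebra.comul (R := k) (A := D) ∘ₗ π =
    TensorProduct.map π π ∘ₗ Coalgebra.comul (R := k) (A := C)
  counit_comp : Coalgebra.counit (R := k) (A := D) ∘ₗ π =
    Coalgebra.counit (R := k) (A := C)

/-- The induced comodule `ind_D^C (V)` of a right `D`-comodule `(V, β)` along
`π : C → D`:  `{ x ∈ V ⊗ C | (β ⊗ id)(x) = (id ⊗ (π ⊗ id) Δ)(x) }`. -/
noncomputable def inducedComod {V : Type} [AddCommGroup V] [Module k V]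
    (π : C →ₗ[k] D) (β : V →ₗ[k] V ⊗[k] D) : Submodule k (V ⊗[k] C) :=
  LinearMap.ker
    ((TensorProduct.assoc k V D C).toLinearMap ∘ₗ β.rTensor C -
      LinearMap.lTensor V (π.rTensor C ∘ₗ Coalgebra.comul (R := k) (A := C)))

/-- The canonical map `(π ⊗ id) ∘ Δ : C → D ⊗ C`. -/
noncomputable def indUnit (π : C →ₗ[k] D) : C →ₗ[k] D ⊗[k] C :=
  π.rTensor C ∘ₗ Coalgebra.comul (R := k) (A := C)

/-- The map `(ε' ⊗ id) : D ⊗ C → C` (followed by scalar multiplication). -/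
noncomputable def counitContract : D ⊗[k] C →ₗ[k] C :=
  (TensorProduct.lid k C).toLinearMap ∘ₗ
    (Coalgebra.counit (R := k) (A := D)).rTensor C

/-- The ambient coaction `id_V ⊗ Δ` on `V ⊗ C` (of which the structure map of the
induced comodule is the restriction). -/
noncomputable def ambientCoaction (V : Type) [AddCommGroup V] [Module k V] :
    V ⊗[k] C →ₗ[k] (V ⊗[k] C) ⊗[k] C :=
  (TensorProduct.assoc k V C C).symm.toLinearMap ∘ₗ
    LinearMap.lTensor V (Coalgebra.comul (R := k) (A := C))

set_option maxHeartbeats 1000000 in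
/-- If `π : C → D` is a surjective linear map of coalgebras satisfying
`Δ' ∘ π = (π ⊗ π) ∘ Δ` — but not necessarily `ε' ∘ π = ε` — then the map
`(π ⊗ id) ∘ Δ : C → ind_D^C (D)` is still surjective. -/
theorem indUnit_surjective_without_counit
    (π : C →ₗ[k] D) (hsurj : Function.Surjective π)
    (hcomul : Coalgebra.comul (R := k) (A := D) ∘ₗ π =
      TensorProduct.map π π ∘ₗ Coalgebra.comul (R := k) (A := C)) :
    (∀ x : C, indUnit π x ∈ inducedComod π (Coalgebra.comul (R := k) (A := D))) ∧
    ∀ y ∈ inducedComod π (Coalgebra.comul (R := k) (A := D)),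
      ∃ x : C, indUnit π x = y := by
  constructor
  · -- membership of `indUnit π x`
    intro x
    have key :
        ((TensorProduct.assoc k D D C).toLinearMap ∘ₗ
            (Coalgebra.comul (R := k) (A := D)).rTensor C -
          LinearMap.lTensor D (π.rTensor C ∘ₗ Coalgebra.comul (R := k) (A := C))) ∘ₗ
          indUnit π = 0 := by
      unfold indUnit
      rw [LinearMap.sub_comp]
      have h1 : ((Coalgebra.comul (R := k) (A := D)).rTensor C) ∘ₗ π.rTensor C
          = (TensorProduct.map π π).rTensor C ∘ₗ
            (Coalgebra.comul (R := k) (A := C)).rTensor C := by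
        rw [← LinearMap.rTensor_comp, hcomul, LinearMap.rTensor_comp]
      have h2 : (TensorProduct.assoc k D D C).toLinearMap ∘ₗ
            (Coalgebra.comul (R := k) (A := D)).rTensor C ∘ₗ
            π.rTensor C ∘ₗ Coalgebra.comul (R := k) (A := C)
          = TensorProduct.map π (π.rTensor C ∘ₗ Coalgebra.comul (R := k) (A := C)) ∘ₗ
            Coalgebra.comul (R := k) (A := C) := by
        calc (TensorProduct.assoc k D D C).toLinearMap ∘ₗ
            (Coalgebra.comul (R := k) (A := D)).rTensor C ∘ₗ
            π.rTensor C ∘ₗ Coalgebra.comul (R := k) (A := C)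
            = (TensorProduct.assoc k D D C).toLinearMap ∘ₗ
              ((Coalgebra.comul (R := k) (A := D)).rTensor C ∘ₗ π.rTensor C) ∘ₗ
              Coalgebra.comul (R := k) (A := C) := by
              simp only [LinearMap.comp_assoc]
          _ = (TensorProduct.assoc k D D C).toLinearMap ∘ₗ
              (TensorProduct.map π π).rTensor C ∘ₗ
              (Coalgebra.comul (R := k) (A := C)).rTensor C ∘ₗ
              Coalgebra.comul (R := k) (A := C) := by
              rw [h1]; simp only [LinearMap.comp_assoc]
          _ = (TensorProduct.map π (TensorProduct.map π LinearMap.id)) ∘ₗ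
              (TensorProduct.assoc k C C C).toLinearMap ∘ₗ
              (Coalgebra.comul (R := k) (A := C)).rTensor C ∘ₗ
              Coalgebra.comul (R := k) (A := C) := by
              rw [LinearMap.rTensor, ← LinearMap.comp_assoc,
                ← TensorProduct.map_map_comp_assoc_eq, LinearMap.comp_assoc]
          _ = (TensorProduct.map π (TensorProduct.map π LinearMap.id)) ∘ₗ
              (Coalgebra.comul (R := k) (A := C)).lTensor C ∘ₗ
              Coalgebra.comul (R := k) (A := C) := by
              rw [Coalgebra.coassoc]
          _ = TensorProduct.map π (π.rTensor C ∘ₗ Coalgebra.comul (R := k) (A := C)) ∘ₗ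
              Coalgebra.comul (R := k) (A := C) := by
              rw [← LinearMap.comp_assoc, LinearMap.lTensor, LinearMap.rTensor,
                ← TensorProduct.map_comp]
              simp
      have h3 : LinearMap.lTensor D (π.rTensor C ∘ₗ Coalgebra.comul (R := k) (A := C)) ∘ₗ
            π.rTensor C ∘ₗ Coalgebra.comul (R := k) (A := C)
          = TensorProduct.map π (π.rTensor C ∘ₗ Coalgebra.comul (R := k) (A := C)) ∘ₗ
            Coalgebra.comul (R := k) (A := C) := by
        rw [← LinearMap.comp_assoc, LinearMap.lTensor_comp_rTensor]
      simp only [LinearMap.comp_assoc] at h2 h3 ⊢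
      rw [h2, h3]
      exact sub_self (TensorProduct.map π (π.rTensor C ∘ₗ
        Coalgebra.comul (R := k) (A := C)) ∘ₗ Coalgebra.comul (R := k) (A := C))
    have := LinearMap.congr_fun key x
    simpa [inducedComod, LinearMap.mem_ker] using this
  · -- surjectivity onto the induced comodule
    intro y hy
    refine ⟨counitContract y, ?_⟩
    set G : D ⊗[k] (D ⊗[k] C) →ₗ[k] D ⊗[k] C :=
      (TensorProduct.lid k (D ⊗[k] C)).toLinearMap ∘ₗ
        (Coalgebra.counit (R := k) (A := D)).rTensor (D ⊗[k] C) with hG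
    have hy' : ((TensorProduct.assoc k D D C).toLinearMap ∘ₗ
          (Coalgebra.comul (R := k) (A := D)).rTensor C) y
        = LinearMap.lTensor D (π.rTensor C ∘ₗ Coalgebra.comul (R := k) (A := C)) y := by
      have := hy
      simp only [inducedComod, LinearMap.mem_ker, LinearMap.sub_apply] at this
      exact sub_eq_zero.mp this
    have claimA : G ∘ₗ (TensorProduct.assoc k D D C).toLinearMap ∘ₗ
          (Coalgebra.comul (R := k) (A := D)).rTensor C = LinearMap.id := by
      have hnat : (Coalgebra.counit (R := k) (A := D)).rTensor (D ⊗[k] C) ∘ₗ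
            (TensorProduct.assoc k D D C).toLinearMap
          = (TensorProduct.assoc k k D C).toLinearMap ∘ₗ
            ((Coalgebra.counit (R := k) (A := D)).rTensor D).rTensor C := by
        rw [LinearMap.rTensor_tensor]
        simp only [LinearMap.comp_assoc, LinearEquiv.comp_coe,
          LinearEquiv.self_trans_symm, LinearEquiv.refl_toLinearMap, LinearMap.comp_id]
      rw [hG]
      simp only [LinearMap.comp_assoc]
      rw [← LinearMap.comp_assoc ((Coalgebra.comul (R := k) (A := D)).rTensor C)
        (TensorProduct.assoc k D D C).toLinearMap
        ((Coalgebra.counit (R := k) (A := D)).rTensor (D ⊗[k] C)), hnat,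
        LinearMap.comp_assoc, ← LinearMap.rTensor_comp,
        Coalgebra.rTensor_counit_comp_comul]
      refine TensorProduct.ext' fun d c => ?_
      simp only [LinearMap.comp_apply, LinearMap.rTensor_tmul,
        TensorProduct.mk_apply, LinearEquiv.coe_coe, TensorProduct.assoc_tmul,
        TensorProduct.lid_tmul, one_smul, LinearMap.id_apply, LinearMap.id_coe, id_eq]
    have claimB : G ∘ₗ LinearMap.lTensor D (π.rTensor C ∘ₗ Coalgebra.comul (R := k) (A := C))
        = indUnit π ∘ₗ counitContract := by
      refine TensorProduct.ext' fun d c => ?_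
      simp only [hG, counitContract, indUnit, LinearMap.comp_apply,
        LinearMap.lTensor_tmul, LinearMap.rTensor_tmul, LinearEquiv.coe_coe,
        TensorProduct.lid_tmul, map_smul, LinearMap.map_smul]
    calc indUnit π (counitContract y) = (indUnit π ∘ₗ counitContract) y := rfl
      _ = (G ∘ₗ LinearMap.lTensor D
            (π.rTensor C ∘ₗ Coalgebra.comul (R := k) (A := C))) y := by rw [claimB]
      _ = G (((TensorProduct.assoc k D D C).toLinearMap ∘ₗ
            (Coalgebra.comul (R := k) (A := D)).rTensor C) y) := by
          simp only [LinearMap.comp_apply]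
          rw [← hy']
          simp only [LinearMap.comp_apply]
      _ = y := by
          have := LinearMap.congr_fun claimA y
          simpa using this


end SuperCoalg
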